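/- arXiv:2010.00508 — 3 statements merged into one kernel-verified Lean document; each statement's English description precedes it below -/
import Mathlib

section
/- Let p ∈ [2,∞) be a real number and let f : [0,1] → ℝ be twice continuously differentiable with f(0) = f(1) = 0. Then ∫₀¹ f''(ξ) · f(ξ) · |f(ξ)|^{p−2} dξ ≤ − π² · (4(p−1)/p²) · ∫₀¹ |f(ξ)|^p dξ. (In other words, the dissipativity constant Λ_p of the Dirichlet Laplacian on (0,1) in L^p satisfies Λ_p ≥ λ₁ · 4(p−1)/p² with λ₁ = π².) -/
/-!
Integrating by parts, `∫ f'' f |f|^(p-2) = -(p-1) ∫ |f|^(p-2) f'²`. The function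
`g = f |f|^(p/2-1)` satisfies `g² = |f|^p` and `g'² = (p²/4) |f|^(p-2) f'²`, so the claim reduces
to Wirtinger's inequality `π² ∫₀¹ g² ≤ ∫₀¹ g'²` for `g` vanishing at both ends. That follows from
the Riccati trick: if `W' = -k² - W²` then `(W g²)' + k² g² = g'² - (g' - W g)² ≤ g'²`, and for
every `k < π` the function `W x = k cot (k x + (π - k) / 2)` is such a solution, regular on `[0, 1]`.
-/

open Real Set Topology intervalIntegral

theorem hasDerivAt_mul_abs_rpow {q : ℝ} (hq : 0 ≤ q) (x : ℝ) :
    HasDerivAt (fun y => y * |y| ^ q) ((q + 1) * |x| ^ q) x := by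
  rcases eq_or_ne x 0 with rfl | hx
  · have hcont : Continuous fun y : ℝ => |y| ^ q :=
      continuous_abs.rpow_const fun _ => Or.inr hq
    have hq0 : q * |(0 : ℝ)| ^ q = 0 := by
      rcases hq.eq_or_lt with h | h
      · simp [← h]
      · simp [zero_rpow h.ne']
    rw [hasDerivAt_iff_tendsto_slope, add_one_mul, hq0, zero_add]
    refine ((hcont.tendsto 0).mono_left nhdsWithin_le_nhds).congr' ?_
    filter_upwards [self_mem_nhdsWithin] with y (hy : y ≠ 0)
    simp [slope_def_field, hy]
  · have habs := (hasDerivAt_abs hx).rpow_const (p := q) (Or.inl (abs_ne_zero.2 hx))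
    refine ((hasDerivAt_id' x).mul habs).congr_deriv ?_
    have : |x| ^ q = |x| ^ (q - 1) * |x| := by
      rw [← rpow_add_one (abs_ne_zero.2 hx), sub_add_cancel]
    rw [this, ← self_mul_sign x]
    ring

theorem mul_abs_rpow_sq {q : ℝ} (hq : q ≠ -1) (x : ℝ) :
    (x * |x| ^ q) ^ 2 = |x| ^ (2 * q + 2) := by
  rw [show 2 * q + 2 = q * (2 : ℕ) + (2 : ℕ) by push_cast; ring,
    rpow_add_natCast' (abs_nonneg x) (by push_cast; contrapose! hq; linarith),
    rpow_mul_natCast (abs_nonneg x), sq_abs]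
  ring

theorem integral_deriv2_mul_mul_abs_rpow {q a b : ℝ} (hq : 0 ≤ q) (hab : a ≤ b)
    {f f' f'' : ℝ → ℝ} (hf : ∀ x ∈ Icc a b, HasDerivAt f (f' x) x)
    (hf' : ∀ x ∈ Icc a b, HasDerivAt f' (f'' x) x) (hf'' : ContinuousOn f'' (Icc a b))
    (ha : f a = 0) (hb : f b = 0) :
    ∫ x in a..b, f'' x * f x * |f x| ^ q = -((q + 1) * ∫ x in a..b, |f x| ^ q * f' x ^ 2) := by
  rw [← uIcc_of_le hab] at hf hf' hf''
  have hu : ∀ x ∈ uIcc a b, HasDerivAt (fun y => f y * |f y| ^ q)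
      ((q + 1) * |f x| ^ q * f' x) x :=
    fun x hx => (hasDerivAt_mul_abs_rpow hq (f x)).comp x (hf x hx)
  have hfc := HasDerivAt.continuousOn hf
  have hf'c := HasDerivAt.continuousOn hf'
  have hu' : ContinuousOn (fun x => (q + 1) * |f x| ^ q * f' x) (uIcc a b) := by
    fun_prop (disch := simp [hq])
  have hibp := integral_mul_deriv_eq_deriv_mul hu hf' hu'.intervalIntegrable
    hf''.intervalIntegrable
  simp only [ha, hb, zero_mul, sub_zero, zero_sub] at hibp
  calc ∫ x in a..b, f'' x * f x * |f x| ^ q = ∫ x in a..b, f x * |f x| ^ q * f'' x := by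
        congr 1; ext x; ring
    _ = -∫ x in a..b, (q + 1) * |f x| ^ q * f' x * f' x := hibp
    _ = -((q + 1) * ∫ x in a..b, |f x| ^ q * f' x ^ 2) := by
        rw [← integral_const_mul]; congr 2; ext x; ring

theorem integral_sq_add_le_of_riccati {a b c : ℝ} (hab : a ≤ b) {g g' W : ℝ → ℝ}
    (hg : ∀ x ∈ Icc a b, HasDerivAt g (g' x) x) (hg' : ContinuousOn g' (Icc a b))
    (hW : ∀ x ∈ Icc a b, HasDerivAt W (-c - W x ^ 2) x) :
    W b * g b ^ 2 - W a * g a ^ 2 + c * ∫ x in a..b, g x ^ 2 ≤ ∫ x in a..b, g' x ^ 2 := by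
  have hgc := HasDerivAt.continuousOn hg
  have hWc := HasDerivAt.continuousOn hW
  set D := fun x => (-c - W x ^ 2) * g x ^ 2 + W x * (2 * g x * g' x)
  have hD : ∀ x ∈ uIcc a b, HasDerivAt (fun x => W x * g x ^ 2) (D x) x := by
    rw [uIcc_of_le hab]
    intro x hx
    refine ((hW x hx).mul ((hg x hx).pow 2)).congr_deriv ?_
    simp only [D, Pi.pow_apply]
    ring
  have hDc : ContinuousOn D (Icc a b) := by fun_prop
  have hint : ∀ {h : ℝ → ℝ}, ContinuousOn h (Icc a b) →
      IntervalIntegrable h MeasureTheory.volume a b :=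
    fun h => h.intervalIntegrable_of_Icc hab
  calc W b * g b ^ 2 - W a * g a ^ 2 + c * ∫ x in a..b, g x ^ 2
      = ∫ x in a..b, (D x + c * g x ^ 2) := by
        rw [integral_add (hint hDc) (hint (by fun_prop)), integral_const_mul,
          integral_eq_sub_of_hasDerivAt hD (hint hDc)]
    _ ≤ ∫ x in a..b, g' x ^ 2 := by
        refine integral_mono_on hab (hint (by fun_prop)) (hint (by fun_prop)) fun x _ => ?_
        nlinarith [sq_nonneg (g' x - W x * g x)]

theorem hasDerivAt_mul_cot {k θ x : ℝ} (hx : sin (k * x + θ) ≠ 0) :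
    HasDerivAt (fun y => k * cot (k * y + θ)) (-k ^ 2 - (k * cot (k * x + θ)) ^ 2) x := by
  have hlin : HasDerivAt (fun y => k * y + θ) k x := by
    simpa using ((hasDerivAt_id x).const_mul k).add_const θ
  have hquot := ((hasDerivAt_cos _).comp x hlin).div ((hasDerivAt_sin _).comp x hlin) hx
  simp only [cot_eq_cos_div_sin]
  refine (hquot.const_mul k).congr_deriv ?_
  simp only [Function.comp_apply]
  field_simp

theorem sq_pi_div_mul_integral_sq_le_integral_deriv_sq {a b : ℝ} (hab : a < b)
    {g g' : ℝ → ℝ} (hg : ∀ x ∈ Icc a b, HasDerivAt g (g' x) x)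
    (hg' : ContinuousOn g' (Icc a b)) (ha : g a = 0) (hb : g b = 0) :
    (π / (b - a)) ^ 2 * ∫ x in a..b, g x ^ 2 ≤ ∫ x in a..b, g' x ^ 2 := by
  have hL : 0 < b - a := sub_pos.2 hab
  have hk : ∀ k ∈ Ioo 0 (π / (b - a)),
      k ^ 2 * ∫ x in a..b, g x ^ 2 ≤ ∫ x in a..b, g' x ^ 2 := by
    rintro k ⟨hk0, hkπ⟩
    have hkL : k * (b - a) < π := (lt_div_iff₀ hL).1 hkπ
    have hsin : ∀ x ∈ Icc a b, sin (k * x + ((π - k * (b - a)) / 2 - k * a)) ≠ 0 := by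
      intro x hx
      refine (sin_pos_of_pos_of_lt_pi ?_ ?_).ne'
      · nlinarith [hx.1]
      · nlinarith [hx.2]
    simpa [ha, hb] using integral_sq_add_le_of_riccati hab.le hg hg'
      fun x hx => hasDerivAt_mul_cot (hsin x hx)
  exact le_of_tendsto
    ((((continuous_pow 2).mul continuous_const).tendsto _).mono_left nhdsWithin_le_nhds)
    (Filter.mem_of_superset (Ioo_mem_nhdsLT (by positivity : 0 < π / (b - a))) hk)

theorem sq_pi_div_mul_integral_abs_rpow_le {p a b : ℝ} (hp : 2 ≤ p) (hab : a < b)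
    {f f' : ℝ → ℝ} (hf : ∀ x ∈ Icc a b, HasDerivAt f (f' x) x)
    (hf' : ContinuousOn f' (Icc a b)) (ha : f a = 0) (hb : f b = 0) :
    (π / (b - a)) ^ 2 * ∫ x in a..b, |f x| ^ p ≤
      p ^ 2 / 4 * ∫ x in a..b, |f x| ^ (p - 2) * f' x ^ 2 := by
  obtain ⟨q, rfl⟩ : ∃ q, p = 2 * q + 2 := ⟨p / 2 - 1, by ring⟩
  have hq : 0 ≤ q := by linarith
  have hg : ∀ x ∈ Icc a b,
      HasDerivAt (fun y => f y * |f y| ^ q) ((q + 1) * |f x| ^ q * f' x) x :=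
    fun x hx => (hasDerivAt_mul_abs_rpow hq (f x)).comp x (hf x hx)
  have hfc := HasDerivAt.continuousOn hf
  have hg' : ContinuousOn (fun x => (q + 1) * |f x| ^ q * f' x) (Icc a b) := by
    fun_prop (disch := simp [hq])
  have hderiv_sq : ∀ y z : ℝ, ((q + 1) * |y| ^ q * z) ^ 2 =
      (2 * q + 2) ^ 2 / 4 * (|y| ^ (2 * q + 2 - 2) * z ^ 2) := fun y z => by
    rw [add_sub_cancel_right, show 2 * q = q * (2 : ℕ) by push_cast; ring,
      rpow_mul_natCast (abs_nonneg y)]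
    ring
  have hwirtinger := sq_pi_div_mul_integral_sq_le_integral_deriv_sq hab hg hg'
    (by simp [ha]) (by simp [hb])
  simpa only [mul_abs_rpow_sq (by linarith : q ≠ -1), hderiv_sq, integral_const_mul]
    using hwirtinger

/-- Dissipativity of the Dirichlet Laplacian on `(0,1)` in `L^p`: for a real `p ∈ [2,∞)`
and a twice continuously differentiable `f : [0,1] → ℝ` (with first and second derivatives
`f'` and `f''`) vanishing at the endpoints,
`∫₀¹ f'' f |f|^{p-2} ≤ -π² (4(p-1)/p²) ∫₀¹ |f|^p`,
i.e. `Λ_p ≥ λ₁ · 4(p-1)/p²` with `λ₁ = π²`. Here the powers are real powers, and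
`f·|f|^{p-2}` vanishes wherever `f` vanishes (automatic with the factor `f`). -/
theorem dirichlet_laplacian_Lp_dissipativity
    (p : ℝ) (hp : 2 ≤ p)
    (f f' f'' : ℝ → ℝ)
    (hf' : ∀ ξ ∈ Set.Icc (0 : ℝ) 1, HasDerivAt f (f' ξ) ξ)
    (hf'' : ∀ ξ ∈ Set.Icc (0 : ℝ) 1, HasDerivAt f' (f'' ξ) ξ)
    (hcont : ContinuousOn f'' (Set.Icc (0 : ℝ) 1))
    (h0 : f 0 = 0) (h1 : f 1 = 0) :
    ∫ ξ in (0 : ℝ)..1, f'' ξ * f ξ * |f ξ| ^ (p - 2) ≤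
      -(π ^ 2) * (4 * (p - 1) / p ^ 2) * ∫ ξ in (0 : ℝ)..1, |f ξ| ^ p := by
  have hwirtinger := sq_pi_div_mul_integral_abs_rpow_le hp zero_lt_one hf'
    (HasDerivAt.continuousOn hf'') h0 h1
  rw [sub_zero, div_one] at hwirtinger
  rw [integral_deriv2_mul_mul_abs_rpow (by linarith) zero_le_one hf' hf'' hcont h0 h1]
  have hc : 0 ≤ 4 * (p - 1) / p ^ 2 := div_nonneg (by linarith) (sq_nonneg p)
  calc -((p - 2 + 1) * ∫ ξ in (0 : ℝ)..1, |f ξ| ^ (p - 2) * f' ξ ^ 2)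
      = -(4 * (p - 1) / p ^ 2) *
          (p ^ 2 / 4 * ∫ ξ in (0 : ℝ)..1, |f ξ| ^ (p - 2) * f' ξ ^ 2) := by
        field_simp; ring
    _ ≤ -(4 * (p - 1) / p ^ 2) * (π ^ 2 * ∫ ξ in (0 : ℝ)..1, |f ξ| ^ p) :=
        mul_le_mul_of_nonpos_left hwirtinger (neg_nonpos.2 hc)
    _ = _ := by ring
end

section
/- For every c > 0 and every ε ∈ (0,1] there exists a constant C ∈ (0,∞) such that for all Δt ∈ (0,1] and all integers n ≥ 1: Δt · Σ_{k=1}^{n} e^{−c·kΔt} · (kΔt)^{ε−1} ≤ C. -/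
/-!
The summand is `Δt · f (kΔt)` with `f x = x ^ (ε - 1) e^{-cx}`, which is antitone on `(0, ∞)`. So the
`k`-th term is at most the integral of `f` over `((k - 1)Δt, kΔt]`, and the whole sum is at most
`∫₀^∞ f = Γ(ε) / c ^ ε`, independently of `n` and `Δt`.
-/

open Real Set MeasureTheory

theorem AntitoneOn.sub_mul_le_intervalIntegral {f : ℝ → ℝ} {a b : ℝ} (hab : a ≤ b)
    (hf : AntitoneOn f (Ioc a b)) (hint : IntervalIntegrable f volume a b) :
    (b - a) * f b ≤ ∫ x in a..b, f x := by
  rcases hab.eq_or_lt with rfl | hlt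
  · simp
  calc (b - a) * f b = ∫ _ in a..b, f b := by simp
    _ ≤ ∫ x in a..b, f x := intervalIntegral.integral_mono_on_of_le_Ioo hab
      intervalIntegrable_const hint fun x hx ↦
        hf (Ioo_subset_Ioc_self hx) (right_mem_Ioc.2 hlt) hx.2.le

theorem AntitoneOn.mul_sum_Icc_le_intervalIntegral {f : ℝ → ℝ} {h : ℝ} (hh : 0 ≤ h) (n : ℕ)
    (hf : AntitoneOn f (Ioc 0 (n * h))) (hint : IntervalIntegrable f volume 0 (n * h)) :
    h * ∑ k ∈ Finset.Icc 1 n, f (k * h) ≤ ∫ x in 0..n * h, f x := by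
  induction n with
  | zero => simp
  | succ n ih =>
    have hle : (n : ℝ) * h ≤ (n + 1 : ℕ) * h := by gcongr; simp
    have hmem : (n : ℝ) * h ∈ uIcc 0 ((n + 1 : ℕ) * h) := by
      rw [uIcc_of_le (by positivity)]
      exact ⟨by positivity, hle⟩
    have hint_left := hint.mono_set (uIcc_subset_uIcc_left hmem)
    have hint_right := hint.mono_set (uIcc_subset_uIcc_right hmem)
    rw [Finset.sum_Icc_succ_top (by omega), mul_add,
      ← intervalIntegral.integral_add_adjacent_intervals hint_left hint_right]
    gcongr
    · exact ih (hf.mono (Ioc_subset_Ioc_right hle)) hint_left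
    · calc h * f ((n + 1 : ℕ) * h) = ((n + 1 : ℕ) * h - n * h) * f ((n + 1 : ℕ) * h) := by
            push_cast; ring
        _ ≤ _ := (hf.mono (Ioc_subset_Ioc_left (by positivity))).sub_mul_le_intervalIntegral
            hle hint_right

theorem intervalIntegral_le_integral_Ioi {f : ℝ → ℝ} {a b : ℝ} (hab : a ≤ b)
    (hf : IntegrableOn f (Ioi a)) (hnn : ∀ x ∈ Ioi a, 0 ≤ f x) :
    ∫ x in a..b, f x ≤ ∫ x in Ioi a, f x := by
  rw [intervalIntegral.integral_of_le hab]
  exact setIntegral_mono_set hf ((ae_restrict_iff' measurableSet_Ioi).2 (ae_of_all _ hnn))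
    Ioc_subset_Ioi_self.eventuallyLE

theorem antitoneOn_rpow_mul_exp_neg_mul {ε c : ℝ} (hε : ε ≤ 1) (hc : 0 ≤ c) :
    AntitoneOn (fun x : ℝ ↦ x ^ (ε - 1) * exp (-(c * x))) (Ioi 0) := by
  intro x hx y _ hxy
  exact mul_le_mul (rpow_le_rpow_of_nonpos hx hxy (by linarith))
    (exp_le_exp.2 (by nlinarith)) (exp_nonneg _) (rpow_nonneg hx.out.le _)

/-- Discrete convolution estimate: for every `c > 0` and `ε ∈ (0,1]` there is a constant
`C ∈ (0,∞)` such that for all `Δt ∈ (0,1]` and all integers `n ≥ 1`,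
`Δt Σ_{k=1}^{n} e^{-c k Δt} (k Δt)^{ε-1} ≤ C`. -/
theorem discrete_convolution_estimate
    (c ε : ℝ) (hc : 0 < c) (hε0 : 0 < ε) (hε1 : ε ≤ 1) :
    ∃ C : ℝ, 0 < C ∧ ∀ Δt : ℝ, 0 < Δt → Δt ≤ 1 → ∀ n : ℕ, 1 ≤ n →
      Δt * ∑ k ∈ Finset.Icc 1 n,
          Real.exp (-c * ((k : ℝ) * Δt)) * ((k : ℝ) * Δt) ^ (ε - 1) ≤ C := by
  set f : ℝ → ℝ := fun x ↦ x ^ (ε - 1) * exp (-(c * x))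
  have hint : IntegrableOn f (Ioi 0) := by
    simpa [f] using integrableOn_rpow_mul_exp_neg_mul_rpow (s := ε - 1) (p := 1) (by linarith)
      one_pos hc
  refine ⟨(1 / c) ^ ε * Gamma ε, by positivity, fun Δt hΔt _ n _ ↦ ?_⟩
  have hanti := antitoneOn_rpow_mul_exp_neg_mul hε1 hc.le
  calc Δt * ∑ k ∈ Finset.Icc 1 n, exp (-c * ((k : ℝ) * Δt)) * ((k : ℝ) * Δt) ^ (ε - 1)
      = Δt * ∑ k ∈ Finset.Icc 1 n, f (k * Δt) := by
        simp only [f, neg_mul, mul_comm (exp _)]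
    _ ≤ ∫ x in 0..n * Δt, f x :=
      (hanti.mono Ioc_subset_Ioi_self).mul_sum_Icc_le_intervalIntegral hΔt.le n
        ((intervalIntegrable_iff_integrableOn_Ioc_of_le (by positivity)).2
          (hint.mono_set Ioc_subset_Ioi_self))
    _ ≤ ∫ x in Ioi 0, f x := intervalIntegral_le_integral_Ioi (by positivity) hint
      fun x hx ↦ mul_nonneg (rpow_nonneg (le_of_lt hx) _) (exp_nonneg _)
    _ = (1 / c) ^ ε * Gamma ε := integral_rpow_mul_exp_neg_mul_Ioi hε0 hc
end

section
/- Let (λ_j)_{j≥1} be positive reals, (q_j)_{j≥1} be nonnegative reals, and α ≥ 0 be such that S := Σ_{j≥1} q_j · λ_j^{2α−1} < ∞. Let (ξ_{ℓ,j})_{ℓ≥0, j≥1} be a family of independent standard real Gaussian random variables on a probability space. Fix Δt > 0 and an integer n ≥ 1, and for each j ≥ 1 define the random variable G_j = λ_j^α · (q_j Δt)^{1/2} · Σ_{k=1}^{n} e^{−λ_j kΔt} · ξ_{n−k, j}. Then Σ_{j≥1} E[G_j²] ≤ S/2; in particular, almost surely (G_j)_{j≥1} ∈ ℓ² and the ℓ²-valued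 random variable Z = (G_j)_{j≥1} satisfies E[‖Z‖_{ℓ²}²] ≤ S/2, uniformly in n and Δt. -/
/-!
Each coordinate `G_j` is a linear combination of pairwise independent standard Gaussians, so
`E[G_j²]` is the sum of the squared coefficients, `λ_j^{2α} q_j Δt Σ_{k=1}^n e^{-2λ_j k Δt}`.
The geometric sum is at most `1 / (2 λ_j Δt)` because `1 + x ≤ eˣ`, whence
`E[G_j²] ≤ q_j λ_j^{2α-1} / 2`. These bounds are summable, and summable `L¹` norms give both
almost sure summability of `Σ_j G_j²` and the interchange of `E` with `Σ_j`.
-/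

open MeasureTheory ProbabilityTheory Real

section

variable {Ω ι : Type*} [MeasurableSpace Ω] {P : Measure Ω}

lemma memLp_of_hasLaw_gaussianReal {X : Ω → ℝ} {μ : ℝ} {v : NNReal}
    (hX : HasLaw X (gaussianReal μ v) P) {p : ENNReal} (hp : p ≠ ⊤) : MemLp X p P := by
  have h := memLp_id_gaussianReal' (μ := μ) (v := v) p hp
  rw [← hX.map_eq] at h
  exact (memLp_map_measure_iff h.1 hX.aemeasurable).mp h

lemma integral_sq_sum_mul_eq_sum_mul_variance [IsFiniteMeasure P] {s : Finset ι}
    {X : ι → Ω → ℝ} (hX : ∀ k ∈ s, MemLp (X k) 2 P) (hmean : ∀ k ∈ s, P[X k] = 0)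
    (hind : Set.Pairwise ↑s fun k l ↦ X k ⟂ᵢ[P] X l) (a : ι → ℝ) :
    ∫ ω, (∑ k ∈ s, a k * X k ω) ^ 2 ∂P = ∑ k ∈ s, a k ^ 2 * Var[X k; P] := by
  set Y : ι → Ω → ℝ := fun k ω ↦ a k * X k ω
  have hY : ∀ k ∈ s, MemLp (Y k) 2 P := fun k hk ↦ (hX k hk).const_mul (a k)
  have hYind : Set.Pairwise ↑s fun k l ↦ Y k ⟂ᵢ[P] Y l := fun k hk l hl hkl ↦
    (hind hk hl hkl).comp (measurable_const_mul (a k)) (measurable_const_mul (a l))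
  have hsum_mean : P[∑ k ∈ s, Y k] = 0 := by
    simp only [Finset.sum_apply]
    rw [integral_finsetSum s fun k hk ↦ (hY k hk).integrable one_le_two]
    exact Finset.sum_eq_zero fun k hk ↦ by
      simp only [Y, integral_const_mul, hmean k hk, mul_zero]
  calc ∫ ω, (∑ k ∈ s, a k * X k ω) ^ 2 ∂P = Var[∑ k ∈ s, Y k; P] := by
        rw [variance_of_integral_eq_zero (memLp_finsetSum' s hY).aemeasurable hsum_mean]
        simp only [Finset.sum_apply, Y]
    _ = ∑ k ∈ s, a k ^ 2 * Var[X k; P] := by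
        rw [IndepFun.variance_sum hY hYind]
        exact Finset.sum_congr rfl fun k _ ↦ variance_const_mul (a k) (X k) P

lemma integral_sq_sum_mul_of_hasLaw_gaussianReal [IsFiniteMeasure P] {s : Finset ι}
    {X : ι → Ω → ℝ} (hX : ∀ k ∈ s, HasLaw (X k) (gaussianReal 0 1) P)
    (hind : Set.Pairwise ↑s fun k l ↦ X k ⟂ᵢ[P] X l) (a : ι → ℝ) :
    ∫ ω, (∑ k ∈ s, a k * X k ω) ^ 2 ∂P = ∑ k ∈ s, a k ^ 2 := by
  rw [integral_sq_sum_mul_eq_sum_mul_variance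
    (fun k hk ↦ memLp_of_hasLaw_gaussianReal (hX k hk) ENNReal.ofNat_ne_top)
    (fun k hk ↦ (hX k hk).integral_eq.trans integral_id_gaussianReal) hind a]
  refine Finset.sum_congr rfl fun k hk ↦ ?_
  rw [(hX k hk).variance_eq, variance_id_gaussianReal, NNReal.coe_one, mul_one]

end

lemma sum_Icc_exp_neg_mul_le_inv {x : ℝ} (hx : 0 < x) (n : ℕ) :
    ∑ k ∈ Finset.Icc 1 n, exp (-(x * k)) ≤ x⁻¹ := by
  set r := exp (-x)
  have hr1 : r < 1 := exp_lt_one_iff.mpr (neg_lt_zero.mpr hx)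
  -- `1 + x ≤ e^x` is exactly `r / (1 - r) ≤ 1 / x`
  have hxr : r * (1 + x) ≤ 1 := by
    calc r * (1 + x) ≤ r * exp x := by gcongr; linarith [add_one_le_exp x]
      _ = 1 := by rw [← exp_add, neg_add_cancel, exp_zero]
  calc ∑ k ∈ Finset.Icc 1 n, exp (-(x * k)) = ∑ k ∈ Finset.Ico 1 (n + 1), r ^ k := by
        rw [← Finset.Ico_add_one_right_eq_Icc]
        exact Finset.sum_congr rfl fun k _ ↦ by rw [← exp_nat_mul]; ring_nf
    _ ≤ r ^ 1 / (1 - r) := geom_sum_Ico_le_of_lt_one (exp_pos _).le hr1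
    _ ≤ x⁻¹ := by
        rw [pow_one, div_le_iff₀ (by linarith), inv_mul_eq_div, le_div_iff₀ hx]
        linarith

lemma ae_summable_norm_of_summable_integral_norm {α E ι : Type*} [MeasurableSpace α]
    {μ : Measure α} [NormedAddCommGroup E] [Countable ι] {F : ι → α → E}
    (hF_int : ∀ i, Integrable (F i) μ) (hF_sum : Summable fun i ↦ ∫ a, ‖F i a‖ ∂μ) :
    ∀ᵐ a ∂μ, Summable fun i ↦ ‖F i a‖ := by
  refine summable_norm_of_tsum_eLpNorm_ne_top le_rfl (fun i ↦ (hF_int i).1) ?_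
  simp_rw [eLpNorm_one_eq_lintegral_enorm, ← ofReal_integral_norm_eq_lintegral_enorm (hF_int _)]
  rw [← ENNReal.ofReal_tsum_of_nonneg (fun i ↦ integral_nonneg fun _ ↦ norm_nonneg _) hF_sum]
  exact ENNReal.ofReal_ne_top

/-- `η k` stands for the noise increment `ξ_{n-k}` injected `k` steps before step `n`. -/
noncomputable def expEulerConvCoord {Ω : Type*} (lam q α Δt : ℝ) (n : ℕ) (η : ℕ → Ω → ℝ)
    (ω : Ω) : ℝ :=
  lam ^ α * √(q * Δt) * ∑ k ∈ Finset.Icc 1 n, exp (-lam * (k * Δt)) * η k ω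

section

variable {Ω : Type*} [MeasurableSpace Ω] {P : Measure Ω} {η : ℕ → Ω → ℝ} {n : ℕ}
  {lam q α Δt : ℝ}

lemma memLp_expEulerConvCoord {p : ENNReal} (hη : ∀ k ∈ Finset.Icc 1 n, MemLp (η k) p P) :
    MemLp (expEulerConvCoord lam q α Δt n η) p P :=
  (memLp_finsetSum _ fun k hk ↦ (hη k hk).const_mul _).const_mul _

lemma integral_sq_expEulerConvCoord_le [IsFiniteMeasure P]
    (hη : ∀ k ∈ Finset.Icc 1 n, HasLaw (η k) (gaussianReal 0 1) P)
    (hind : Set.Pairwise ↑(Finset.Icc 1 n) fun k l ↦ η k ⟂ᵢ[P] η l)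
    (hlam : 0 < lam) (hq : 0 ≤ q) (hΔt : 0 < Δt) :
    ∫ ω, expEulerConvCoord lam q α Δt n η ω ^ 2 ∂P ≤ q * lam ^ (2 * α - 1) / 2 := by
  set c := lam ^ α * √(q * Δt)
  have hc : c ^ 2 = lam ^ (2 * α) * (q * Δt) := by
    rw [mul_pow, sq_sqrt (by positivity), ← rpow_mul_natCast hlam.le]
    norm_num [mul_comm]
  calc ∫ ω, expEulerConvCoord lam q α Δt n η ω ^ 2 ∂P
      = ∫ ω, (∑ k ∈ Finset.Icc 1 n, c * exp (-lam * (k * Δt)) * η k ω) ^ 2 ∂P := by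
        simp only [expEulerConvCoord, Finset.mul_sum, mul_assoc, c]
    _ = ∑ k ∈ Finset.Icc 1 n, (c * exp (-lam * (k * Δt))) ^ 2 :=
        integral_sq_sum_mul_of_hasLaw_gaussianReal hη hind _
    _ = c ^ 2 * ∑ k ∈ Finset.Icc 1 n, exp (-(2 * lam * Δt * k)) := by
        rw [Finset.mul_sum]
        refine Finset.sum_congr rfl fun k _ ↦ ?_
        rw [mul_pow, ← exp_nat_mul]
        ring_nf
    _ ≤ c ^ 2 * (2 * lam * Δt)⁻¹ := by
        gcongr
        exact sum_Icc_exp_neg_mul_le_inv (by positivity) n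
    _ = q * lam ^ (2 * α - 1) / 2 := by
        rw [hc, rpow_sub_one hlam.ne']
        field_simp

end

theorem exponential_euler_stochastic_convolution_moment_bound_general
    {Ω : Type*} [MeasurableSpace Ω] (P : Measure Ω) [IsProbabilityMeasure P]
    (lam q : ℕ → ℝ) (hlam : ∀ j, 0 < lam j) (hq : ∀ j, 0 ≤ q j)
    (α : ℝ)
    (S : ℝ) (hS : HasSum (fun j : ℕ => q j * lam j ^ (2 * α - 1)) S)
    (ξ : ℕ × ℕ → Ω → ℝ)
    (hmeas : ∀ p, Measurable (ξ p))
    (hindep : ProbabilityTheory.iIndepFun ξ P)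
    (hgauss : ∀ p, Measure.map (ξ p) P = ProbabilityTheory.gaussianReal 0 1)
    (Δt : ℝ) (hΔt : 0 < Δt) (n : ℕ)
    (G : ℕ → Ω → ℝ)
    (hG : ∀ j ω, G j ω = lam j ^ α * Real.sqrt (q j * Δt) *
      ∑ k ∈ Finset.Icc 1 n, Real.exp (-lam j * ((k : ℝ) * Δt)) * ξ (n - k, j) ω) :
    (∑' j : ℕ, ∫ ω, (G j ω) ^ 2 ∂P) ≤ S / 2 ∧
    (∀ᵐ ω ∂P, Summable fun j : ℕ => (G j ω) ^ 2) ∧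
    (∫ ω, ∑' j : ℕ, (G j ω) ^ 2 ∂P) ≤ S / 2 := by
  have hG_eq j : G j = expEulerConvCoord (lam j) (q j) α Δt n fun k ↦ ξ (n - k, j) :=
    funext (hG j)
  have hlaw (j k : ℕ) : HasLaw (ξ (n - k, j)) (gaussianReal 0 1) P :=
    ⟨(hmeas _).aemeasurable, hgauss _⟩
  have hpair j : Set.Pairwise ↑(Finset.Icc 1 n) fun k l ↦ ξ (n - k, j) ⟂ᵢ[P] ξ (n - l, j) := by
    intro k hk l hl hkl
    refine hindep.indepFun fun h ↦ hkl ?_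
    simp only [Finset.coe_Icc, Set.mem_Icc, Prod.mk.injEq] at hk hl h
    omega
  have hint j : Integrable (fun ω ↦ G j ω ^ 2) P := by
    rw [hG_eq]
    exact (memLp_expEulerConvCoord fun k _ ↦
      memLp_of_hasLaw_gaussianReal (hlaw j k) ENNReal.ofNat_ne_top).integrable_sq
  have hmom j : ∫ ω, G j ω ^ 2 ∂P ≤ q j * lam j ^ (2 * α - 1) / 2 := by
    rw [hG_eq]
    exact integral_sq_expEulerConvCoord_le (fun k _ ↦ hlaw j k) (hpair j) (hlam j) (hq j) hΔt
  have hnorm (j : ℕ) (ω : Ω) : ‖G j ω ^ 2‖ = G j ω ^ 2 := norm_of_nonneg (sq_nonneg _)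
  have hsum : Summable fun j ↦ ∫ ω, ‖G j ω ^ 2‖ ∂P := by
    simp only [hnorm]
    exact (hS.summable.div_const 2).of_nonneg_of_le (fun j ↦ integral_nonneg fun _ ↦ sq_nonneg _)
      hmom
  have hle : ∑' j, ∫ ω, G j ω ^ 2 ∂P ≤ S / 2 := by
    refine hasSum_le hmom ?_ (hS.div_const 2)
    simpa only [hnorm] using hsum.hasSum
  refine ⟨hle, ?_, ?_⟩
  · simpa only [hnorm] using
      ae_summable_norm_of_summable_integral_norm hint hsum
  · rwa [← integral_tsum_of_summable_integral_norm hint hsum]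

/-- Uniform moment bound for the exponential-Euler discretization of the stochastic
convolution (diagonal-noise case): let `(λ_j)` be positive reals, `(q_j)` nonnegative
reals, and `α ≥ 0` with `S = Σ_j q_j λ_j^{2α-1} < ∞`. Let `(ξ_{ℓ,j})` be a family of
independent standard real Gaussian random variables, fix `Δt > 0` and an integer `n ≥ 1`,
and set `G_j = λ_j^α (q_j Δt)^{1/2} Σ_{k=1}^{n} e^{-λ_j k Δt} ξ_{n-k,j}`. Then
`Σ_j E[G_j²] ≤ S/2`; in particular, almost surely `(G_j)_j ∈ ℓ²`, and
`E[‖(G_j)_j‖²_{ℓ²}] = E[Σ_j G_j²] ≤ S/2`, uniformly in `n` and `Δt`. -/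
theorem exponential_euler_stochastic_convolution_moment_bound
    {Ω : Type*} [MeasurableSpace Ω] (P : Measure Ω) [IsProbabilityMeasure P]
    (lam q : ℕ → ℝ) (hlam : ∀ j, 0 < lam j) (hq : ∀ j, 0 ≤ q j)
    (α : ℝ) (hα : 0 ≤ α)
    (S : ℝ) (hS : HasSum (fun j : ℕ => q j * lam j ^ (2 * α - 1)) S)
    (ξ : ℕ × ℕ → Ω → ℝ)
    (hmeas : ∀ p, Measurable (ξ p))
    (hindep : ProbabilityTheory.iIndepFun ξ P)
    (hgauss : ∀ p, Measure.map (ξ p) P = ProbabilityTheory.gaussianReal 0 1)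
    (Δt : ℝ) (hΔt : 0 < Δt) (n : ℕ) (hn : 1 ≤ n)
    (G : ℕ → Ω → ℝ)
    (hG : ∀ j ω, G j ω = lam j ^ α * Real.sqrt (q j * Δt) *
      ∑ k ∈ Finset.Icc 1 n, Real.exp (-lam j * ((k : ℝ) * Δt)) * ξ (n - k, j) ω) :
    (∑' j : ℕ, ∫ ω, (G j ω) ^ 2 ∂P) ≤ S / 2 ∧
    (∀ᵐ ω ∂P, Summable fun j : ℕ => (G j ω) ^ 2) ∧
    (∫ ω, ∑' j : ℕ, (G j ω) ^ 2 ∂P) ≤ S / 2 :=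
  exponential_euler_stochastic_convolution_moment_bound_general P lam q hlam hq α S hS ξ hmeas
    hindep hgauss Δt hΔt n G hG
end
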